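/- Let f ∈ L¹([−π,π]) with f = f_R + i·f_I, where f_R and f_I are real-valued and f_R is essentially positive, let A_n(f) ∈ ℝ^{n×n} be the Toeplitz matrix generated by f, let A_R = A_n(f_R), let Y_n be the n×n exchange matrix, and let E_n = A_R^{-1/2} A_n(f) A_R^{-1/2} − I_n. Then the matrix Y_n E_n is symmetric and skew-centrosymmetric, i.e., (Y_n E_n)^T = Y_n E_n and (Y_n E_n) Y_n = −Y_n (Y_n E_n). -/

import Mathlib

/-!
Since `A` is Toeplitz, the exchange matrix `Y` satisfies `Y A Y = Aᵀ`, so conjugation by `Y`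
fixes the symmetric part `A_R = (A + Aᵀ)/2` and negates the skew part `K = (A - Aᵀ)/2`. By
uniqueness of positive square roots, `Y` then commutes with `S = A_R^{1/2}`, and `E = S⁻¹ K S⁻¹`
is skew-symmetric and anticommutes with `Y`; both claims about `Y E` follow. Positive
definiteness of `A_R` comes from
`xᵀ A_R x = (2π)⁻¹ ∫ f_R |∑ⱼ xⱼ e^{ijθ}|² dθ ≥ (ess inf f_R / 2) ‖x‖²`.
-/

open MeasureTheory Matrix Filter

/-- The `k`-th Fourier coefficient of `f : [-π,π] → ℂ`. -/
noncomputable def fCoeff (f : ℝ → ℂ) (k : ℤ) : ℂ :=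
  (1 / (2 * Real.pi)) * ∫ θ in (-Real.pi)..Real.pi, f θ * Complex.exp (-Complex.I * k * θ)

/-- The `n × n` Toeplitz matrix generated by `f`, with entries `a_{j-k}`. -/
noncomputable def toeplitzC (n : ℕ) (f : ℝ → ℂ) : Matrix (Fin n) (Fin n) ℂ :=
  Matrix.of fun j k => fCoeff f ((j : ℤ) - (k : ℤ))

/-- The `n × n` exchange matrix, with ones on the main anti-diagonal. -/
def exchange (n : ℕ) : Matrix (Fin n) (Fin n) ℝ :=
  Matrix.of fun j k => if (j : ℕ) + (k : ℕ) + 1 = n then 1 else 0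

open Real

lemma exchange_apply (n : ℕ) (j k : Fin n) :
    exchange n j k = if k = j.rev then 1 else 0 := by
  simp only [exchange, of_apply, Fin.ext_iff, Fin.val_rev]
  congr 1
  have := j.isLt
  exact propext (by omega)

lemma exchange_transpose (n : ℕ) : (exchange n)ᵀ = exchange n := by
  ext j k
  simp only [transpose_apply, exchange, of_apply, add_comm (k : ℕ)]

lemma exchange_mul_apply (n : ℕ) (M : Matrix (Fin n) (Fin n) ℝ) (j k : Fin n) :
    (exchange n * M) j k = M j.rev k := by
  simp [mul_apply, exchange_apply, ite_mul]

lemma mul_exchange_apply (n : ℕ) (M : Matrix (Fin n) (Fin n) ℝ) (j k : Fin n) :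
    (M * exchange n) j k = M j k.rev := by
  rw [← transpose_transpose (M * exchange n), transpose_apply, transpose_mul, exchange_transpose,
    exchange_mul_apply, transpose_apply]

lemma exchange_mul_exchange (n : ℕ) : exchange n * exchange n = 1 := by
  ext j k
  rw [exchange_mul_apply, exchange_apply, Fin.rev_rev, one_apply]
  exact if_congr eq_comm rfl rfl

lemma exchange_mul_mul_exchange_of_toeplitz {n : ℕ} {A : Matrix (Fin n) (Fin n) ℝ} (a : ℤ → ℝ)
    (hA : ∀ j k : Fin n, A j k = a ((j : ℤ) - k)) : exchange n * A * exchange n = Aᵀ := by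
  ext j k
  rw [mul_exchange_apply, exchange_mul_apply, transpose_apply, hA, hA, Fin.val_rev, Fin.val_rev]
  congr 1
  have := j.isLt; have := k.isLt
  omega

lemma mul_eq_mul_of_mul_mul_eq {M : Type*} [Monoid M] {y a b : M} (hy : y * y = 1)
    (h : y * a * y = b) : y * a = b * y := by
  rw [← h, mul_assoc _ y, hy, mul_one]

section

variable {ι : Type*} [Fintype ι] [DecidableEq ι]

open scoped MatrixOrder in
lemma Matrix.PosSemidef.conj_eq_self_of_conj_mul_self {Y S : Matrix ι ι ℝ} (hYT : Yᵀ = Y)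
    (hYY : Y * Y = 1) (hS : S.PosSemidef) (h : Y * (S * S) * Y = S * S) : Y * S * Y = S := by
  have hYSY : (Y * S * Y).PosSemidef := by
    simpa only [conjTranspose_eq_transpose_of_trivial, hYT] using hS.conjTranspose_mul_mul_same Y
  refine (CFC.sq_eq_sq_iff _ _ hYSY.nonneg hS.nonneg).mp ?_
  calc (Y * S * Y) ^ 2 = Y * S * (Y * Y) * S * Y := by noncomm_ring
    _ = S ^ 2 := by rw [hYY, mul_one, mul_assoc Y S S, h, sq]

lemma inv_mul_mul_inv_sub_one_eq_skew {A S : Matrix ι ι ℝ} (hS : S.PosDef)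
    (hSS : S * S = (1 / 2 : ℝ) • (A + Aᵀ)) :
    S⁻¹ * A * S⁻¹ - 1 = S⁻¹ * ((1 / 2 : ℝ) • (A - Aᵀ)) * S⁻¹ := by
  have hdet : IsUnit S.det := hS.det_pos.ne'.isUnit
  have hone : S⁻¹ * (S * S) * S⁻¹ = 1 := by
    rw [← mul_assoc, nonsing_inv_mul _ hdet, one_mul, mul_nonsing_inv _ hdet]
  rw [← hone, ← sub_mul, ← Matrix.mul_sub, hSS]
  congr 2
  module

lemma transpose_inv_mul_mul_inv_sub_one {A S : Matrix ι ι ℝ} (hS : S.PosDef)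
    (hSS : S * S = (1 / 2 : ℝ) • (A + Aᵀ)) :
    (S⁻¹ * A * S⁻¹ - 1)ᵀ = -(S⁻¹ * A * S⁻¹ - 1) := by
  have hST : S⁻¹ᵀ = S⁻¹ := by
    rw [transpose_nonsing_inv, ← conjTranspose_eq_transpose_of_trivial, hS.isHermitian.eq]
  have hKT : ((1 / 2 : ℝ) • (A - Aᵀ))ᵀ = -((1 / 2 : ℝ) • (A - Aᵀ)) := by
    rw [transpose_smul, transpose_sub, transpose_transpose]
    module
  rw [inv_mul_mul_inv_sub_one_eq_skew hS hSS, transpose_mul, transpose_mul, hST, hKT,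
    Matrix.neg_mul, Matrix.mul_neg, mul_assoc]

lemma anticommute_inv_mul_mul_inv_sub_one {Y A S : Matrix ι ι ℝ} (hYT : Yᵀ = Y) (hYY : Y * Y = 1)
    (hYA : Y * A * Y = Aᵀ) (hS : S.PosDef) (hSS : S * S = (1 / 2 : ℝ) • (A + Aᵀ)) :
    Y * (S⁻¹ * A * S⁻¹ - 1) = -((S⁻¹ * A * S⁻¹ - 1) * Y) := by
  have hYAT : Y * Aᵀ * Y = A := by
    simpa only [transpose_mul, hYT, transpose_transpose, mul_assoc] using congrArg transpose hYA
  have hYS : Y * S = S * Y := by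
    refine mul_eq_mul_of_mul_mul_eq hYY (hS.posSemidef.conj_eq_self_of_conj_mul_self hYT hYY ?_)
    rw [hSS, Matrix.mul_smul, Matrix.smul_mul, Matrix.mul_add, add_mul, hYA, hYAT, add_comm]
  have hdet : IsUnit S.det := hS.det_pos.ne'.isUnit
  have hYSinv : Y * S⁻¹ = S⁻¹ * Y := by
    calc Y * S⁻¹ = S⁻¹ * (S * Y) * S⁻¹ := by
          rw [← mul_assoc, nonsing_inv_mul _ hdet, one_mul]
      _ = S⁻¹ * Y := by rw [← hYS, mul_assoc, mul_assoc, mul_nonsing_inv _ hdet, mul_one]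
  have hYK : Y * ((1 / 2 : ℝ) • (A - Aᵀ)) = -((1 / 2 : ℝ) • (A - Aᵀ) * Y) := by
    refine mul_eq_mul_of_mul_mul_eq hYY ?_ |>.trans (neg_mul _ _)
    rw [Matrix.mul_smul, Matrix.smul_mul, Matrix.mul_sub, Matrix.sub_mul, hYA, hYAT]
    module
  rw [inv_mul_mul_inv_sub_one_eq_skew hS hSS]
  calc Y * (S⁻¹ * ((1 / 2 : ℝ) • (A - Aᵀ)) * S⁻¹)
      = S⁻¹ * (Y * ((1 / 2 : ℝ) • (A - Aᵀ))) * S⁻¹ := by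
        rw [← mul_assoc, ← mul_assoc, hYSinv, mul_assoc S⁻¹]
    _ = -(S⁻¹ * ((1 / 2 : ℝ) • (A - Aᵀ)) * (Y * S⁻¹)) := by rw [hYK]; noncomm_ring
    _ = -(S⁻¹ * ((1 / 2 : ℝ) • (A - Aᵀ)) * S⁻¹ * Y) := by rw [hYSinv, mul_assoc _ S⁻¹]

end

section

lemma integral_cos_int_mul (a : ℤ) :
    ∫ θ in -π..π, cos (a * θ) = if a = 0 then 2 * π else 0 := by
  rcases eq_or_ne a 0 with rfl | ha
  · simp [two_mul]
  · rw [if_neg ha, intervalIntegral.integral_comp_mul_left (fun x => cos x) (by exact_mod_cast ha)]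
    simp [integral_cos, sin_int_mul_pi]

lemma intervalIntegral.integral_mul_finsetSum {ι : Type*} (s : Finset ι) {g : ℝ → ℝ} {a b : ℝ}
    (hg : IntervalIntegrable g volume a b) {φ : ι → ℝ → ℝ} (hφ : ∀ i ∈ s, Continuous (φ i)) :
    ∫ θ in a..b, g θ * ∑ i ∈ s, φ i θ = ∑ i ∈ s, ∫ θ in a..b, g θ * φ i θ := by
  simp_rw [Finset.mul_sum]
  exact intervalIntegral.integral_finsetSum fun i hi => hg.mul_continuousOn (hφ i hi).continuousOn

variable {n : ℕ}

/-- For real `g` this is the real part of `toeplitzC n g`. -/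
noncomputable def cosToeplitz (n : ℕ) (g : ℝ → ℝ) : Matrix (Fin n) (Fin n) ℝ :=
  of fun j k => (2 * π)⁻¹ * ∫ θ in -π..π, g θ * cos (((j : ℤ) - k : ℤ) * θ)

/-- `|∑ⱼ xⱼ e^{ijθ}|²`. -/
noncomputable def trigNormSq (x : Fin n → ℝ) (θ : ℝ) : ℝ :=
  ∑ j, ∑ k, x j * x k * cos (((j : ℤ) - k : ℤ) * θ)

lemma trigNormSq_eq (x : Fin n → ℝ) (θ : ℝ) :
    trigNormSq x θ = (∑ j, x j * cos (j * θ)) ^ 2 + (∑ j, x j * sin (j * θ)) ^ 2 := by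
  simp only [trigNormSq, sq, Finset.sum_mul_sum, ← Finset.sum_add_distrib]
  refine Finset.sum_congr rfl fun j _ => Finset.sum_congr rfl fun k _ => ?_
  rw [show (((j : ℤ) - k : ℤ) : ℝ) * θ = j * θ - k * θ by push_cast; ring, cos_sub]
  ring

lemma trigNormSq_nonneg (x : Fin n → ℝ) (θ : ℝ) : 0 ≤ trigNormSq x θ := by
  rw [trigNormSq_eq]
  positivity

lemma continuous_trigNormSq (x : Fin n → ℝ) : Continuous (trigNormSq x) := by
  unfold trigNormSq
  fun_prop

lemma integral_trigNormSq (x : Fin n → ℝ) :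
    ∫ θ in -π..π, trigNormSq x θ = 2 * π * ∑ j, x j ^ 2 := by
  unfold trigNormSq
  rw [intervalIntegral.integral_finsetSum fun j _ =>
    (by fun_prop : Continuous _).intervalIntegrable _ _, Finset.mul_sum]
  refine Finset.sum_congr rfl fun j _ => ?_
  rw [intervalIntegral.integral_finsetSum fun k _ =>
    (by fun_prop : Continuous _).intervalIntegrable _ _]
  simp only [intervalIntegral.integral_const_mul, integral_cos_int_mul, sub_eq_zero, Nat.cast_inj,
    Fin.val_inj, mul_ite, mul_zero, Finset.sum_ite_eq, Finset.mem_univ, if_true]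
  ring

lemma dotProduct_cosToeplitz_mulVec {g : ℝ → ℝ} (hg : IntervalIntegrable g volume (-π) π)
    (x : Fin n → ℝ) :
    x ⬝ᵥ cosToeplitz n g *ᵥ x = (2 * π)⁻¹ * ∫ θ in -π..π, g θ * trigNormSq x θ := by
  simp only [trigNormSq]
  rw [intervalIntegral.integral_mul_finsetSum _ hg fun j _ => by fun_prop, Finset.mul_sum]
  refine Finset.sum_congr rfl fun j _ => ?_
  rw [intervalIntegral.integral_mul_finsetSum _ hg fun k _ => by fun_prop, mulVec, dotProduct,
    Finset.mul_sum, Finset.mul_sum]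
  refine Finset.sum_congr rfl fun k _ => ?_
  simp_rw [mul_left_comm (g _), intervalIntegral.integral_const_mul, cosToeplitz, of_apply]
  ring

lemma isBoundedUnder_ge_of_essInf_ne_zero {α : Type*} [MeasurableSpace α] {μ : Measure α}
    {g : α → ℝ} (h : essInf g μ ≠ 0) : IsBoundedUnder (· ≥ ·) (ae μ) g := by
  by_contra hb
  exact h (Real.liminf_of_not_isBoundedUnder hb)

lemma cosToeplitz_transpose (g : ℝ → ℝ) : (cosToeplitz n g)ᵀ = cosToeplitz n g := by
  ext j k
  simp only [transpose_apply, cosToeplitz, of_apply]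
  congr 2 with θ
  rw [← cos_neg]
  push_cast
  ring_nf

lemma cosToeplitz_posDef {g : ℝ → ℝ} (hg : IntervalIntegrable g volume (-π) π)
    (hpos : 0 < essInf g (volume.restrict (Set.Icc (-π) π))) : (cosToeplitz n g).PosDef := by
  set m := essInf g (volume.restrict (Set.Icc (-π) π))
  refine .of_dotProduct_mulVec_pos
    (by rw [IsHermitian, conjTranspose_eq_transpose_of_trivial, cosToeplitz_transpose])
    fun x hx => ?_
  have hae : ∀ᵐ θ ∂volume.restrict (Set.Icc (-π) π), m / 2 < g θ :=
    ae_lt_of_lt_essInf (by linarith) (isBoundedUnder_ge_of_essInf_ne_zero hpos.ne')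
  have hlower : m / 2 * (2 * π * ∑ j, x j ^ 2) ≤ ∫ θ in -π..π, g θ * trigNormSq x θ := by
    rw [← integral_trigNormSq, ← intervalIntegral.integral_const_mul]
    refine intervalIntegral.integral_mono_ae_restrict (by linarith [pi_pos])
      ((continuous_trigNormSq x).const_mul _ |>.intervalIntegrable _ _)
      (hg.mul_continuousOn (continuous_trigNormSq x).continuousOn)
      (hae.mono fun θ hθ => mul_le_mul_of_nonneg_right hθ.le (trigNormSq_nonneg x θ))
  have hx2 : 0 < ∑ j, x j ^ 2 := by
    obtain ⟨j, hj⟩ := Function.ne_iff.mp hx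
    exact Finset.sum_pos' (fun i _ => sq_nonneg _)
      ⟨j, Finset.mem_univ j, pow_two_pos_of_ne_zero hj⟩
  rw [show star x = x from rfl, dotProduct_cosToeplitz_mulVec hg]
  exact mul_pos (by positivity) (lt_of_lt_of_le (mul_pos (by linarith) (by positivity)) hlower)

end

lemma re_fCoeff_add_fCoeff_neg {f : ℝ → ℂ} (hf : IntervalIntegrable f volume (-π) π) (a : ℤ) :
    (fCoeff f a + fCoeff f (-a)).re = π⁻¹ * ∫ θ in -π..π, (f θ).re * cos (a * θ) := by
  have hexp : ∀ b : ℤ, IntervalIntegrable (fun θ : ℝ => f θ * Complex.exp (-Complex.I * b * θ))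
      volume (-π) π := fun b => hf.mul_continuousOn (by fun_prop)
  have hpair : ∀ θ : ℝ, f θ * Complex.exp (-Complex.I * a * θ)
      + f θ * Complex.exp (-Complex.I * (-a : ℤ) * θ) = 2 * (f θ * (cos (a * θ) : ℂ)) := by
    intro θ
    rw [← mul_add, Complex.ofReal_cos, mul_left_comm, Complex.two_cos]
    push_cast
    ring_nf
  have hcos : IntervalIntegrable (fun θ : ℝ => f θ * (cos (a * θ) : ℂ)) volume (-π) π :=
    hf.mul_continuousOn (by fun_prop)
  rw [fCoeff, fCoeff, ← mul_add, ← intervalIntegral.integral_add (hexp a) (hexp (-a))]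
  simp_rw [hpair]
  rw [intervalIntegral.integral_const_mul, ← mul_assoc,
    show 1 / (2 * (π : ℂ)) * 2 = ((π⁻¹ : ℝ) : ℂ) by push_cast; field_simp,
    Complex.re_ofReal_mul]
  have hre := intervalIntegral.intervalIntegral_re hcos
  simp only [RCLike.re_to_complex, Complex.re_mul_ofReal] at hre
  rw [hre]

lemma half_add_transpose_eq_cosToeplitz {n : ℕ} {f : ℝ → ℂ}
    (hf : IntervalIntegrable f volume (-π) π) {A : Matrix (Fin n) (Fin n) ℝ}
    (hA : ∀ j k : Fin n, A j k = (fCoeff f (j - k)).re) :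
    (1 / 2 : ℝ) • (A + Aᵀ) = cosToeplitz n fun θ => (f θ).re := by
  ext j k
  rw [Matrix.smul_apply, Matrix.add_apply, transpose_apply, hA, hA,
    show ((k : ℕ) : ℤ) - j = -((j : ℤ) - k) by ring, ← Complex.add_re,
    re_fCoeff_add_fCoeff_neg hf, smul_eq_mul]
  simp only [cosToeplitz, of_apply]
  ring

/-- With `A_R = A_n(f_R)`, `E = A_R^{-1/2} A_n(f) A_R^{-1/2} - I` and `Y` the
exchange matrix, the matrix `Y E` is symmetric and skew-centrosymmetric. -/
theorem stmt4 (n : ℕ) (fR fI : ℝ → ℝ) (f : ℝ → ℂ)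
    (hf : ∀ θ, f θ = (fR θ : ℂ) + Complex.I * (fI θ : ℂ))
    (hfint : IntegrableOn f (Set.Icc (-Real.pi) Real.pi))
    (hpos : 0 < essInf fR (volume.restrict (Set.Icc (-Real.pi) Real.pi)))
    (A : Matrix (Fin n) (Fin n) ℝ)
    (hA : ∀ j k, (A j k : ℂ) = toeplitzC n f j k)
    (AR : Matrix (Fin n) (Fin n) ℝ)
    (hAR : AR = (1 / 2 : ℝ) • (A + Aᵀ)) :
    AR.PosDef ∧
    ∀ S : Matrix (Fin n) (Fin n) ℝ, S.IsSymm → S.PosDef → S * S = AR →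
      ∀ E : Matrix (Fin n) (Fin n) ℝ, E = S⁻¹ * A * S⁻¹ - 1 →
        (exchange n * E)ᵀ = exchange n * E ∧
        (exchange n * E) * exchange n = -(exchange n * (exchange n * E)) := by
  have hle : -π ≤ π := by linarith [pi_pos]
  have hre : (fun θ => (f θ).re) = fR := funext fun θ => by simp [hf]
  have hfi : IntervalIntegrable f volume (-π) π :=
    (intervalIntegrable_iff_integrableOn_Icc_of_le hle).mpr hfint
  have hfRi : IntervalIntegrable fR volume (-π) π :=
    (intervalIntegrable_iff_integrableOn_Icc_of_le hle).mpr (hre ▸ hfint.re)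
  have hAre : ∀ j k : Fin n, A j k = (fCoeff f (j - k)).re := fun j k => by
    simpa [toeplitzC] using congrArg Complex.re (hA j k)
  have hAR' : AR = cosToeplitz n fR := by
    rw [hAR, half_add_transpose_eq_cosToeplitz hfi hAre, hre]
  refine ⟨hAR' ▸ cosToeplitz_posDef hfRi hpos, fun S _ hS hSS E hE => ?_⟩
  have hYA := exchange_mul_mul_exchange_of_toeplitz (fun d => (fCoeff f d).re) hAre
  have hET := transpose_inv_mul_mul_inv_sub_one hS (hSS.trans hAR)
  have hYE := anticommute_inv_mul_mul_inv_sub_one (exchange_transpose n)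
    (exchange_mul_exchange n) hYA hS (hSS.trans hAR)
  rw [← hE] at hET hYE
  constructor
  · rw [transpose_mul, hET, exchange_transpose, Matrix.neg_mul, ← hYE]
  · rw [← mul_assoc (exchange n) (exchange n), exchange_mul_exchange, one_mul, hYE,
      Matrix.neg_mul, mul_assoc, exchange_mul_exchange, mul_one]
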